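/- arXiv:0803.2778 — 3 statements merged into one kernel-verified Lean document; each statement's English description precedes it below -/
import Mathlib

section
/- Let n ∈ ℕ and q ∈ ℂ. The (n+1)×(n+1) complex matrix M with entries M_{km} = (-1)^{k+m}·q^{(m-k)(m-k-1)/2}·C(n-k, n-m)_q satisfies σ₁(q,n)·M = 1 and M·σ₁(q,n) = 1; that is, σ₁(q,n) is invertible with inverse entries σ₁(q,n)⁻¹_{km} = (-1)^{k+m}·q^{(m-k)(m-k-1)/2}·C(n-k, n-m)_q. (Here (m-k)(m-k-1)/2 is a nonnegative integer for every integer m-k.) -/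
/-!
Reversing the order of rows and columns turns `σ₁(q,n)` into the lower unitriangular
`q`-Pascal matrix `P = (C(i,j)_q)_{i,j}`, and `M` into the matrix with entries
`f_j(i) = (-1)^{i+j} q^{(i-j)(i-j-1)/2} C(i,j)_q`, so it suffices to show `P · f_j = e_j`.
The recursion of `C(a+1,i)_q` moves onto the column:
`∑ᵢ C(a+1,i)_q f(i) = ∑ᵢ C(a,i)_q (f(i+1) + q^i f(i))`, and the same recursion, applied to
`C(i+1,j)_q` inside `f_j(i+1)`, gives `f_j(i+1) + q^i f_j(i) = f_{j-1}(i)` (and `0` for `j = 0`).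
Induction on `a` then gives `P · f_j = e_j`; a one-sided inverse of a square matrix is two-sided.
-/

/-- The Gaussian ($q$-)binomial coefficient `C(n,k)_q`, defined by the recursion
`C(n+1,k)_q = C(n,k-1)_q + q^k * C(n,k)_q`, with `C(n,0)_q = C(n,n)_q = 1` and
`C(n,k)_q = 0` for `k > n`. -/
noncomputable def qBinom (q : ℂ) : ℕ → ℕ → ℂ
  | 0, 0 => 1
  | 0, _ + 1 => 0
  | _ + 1, 0 => 1
  | n + 1, k + 1 => qBinom q n k + q ^ (k + 1) * qBinom q n (k + 1)

/-- The matrix `σ₁(q,n)` with entries `σ₁(q,n)_{km} = C(n-k, n-m)_q`. -/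
noncomputable def sigma1 (q : ℂ) (n : ℕ) : Matrix (Fin (n + 1)) (Fin (n + 1)) ℂ :=
  fun k m => qBinom q (n - k.val) (n - m.val)

/-- The matrix `σ₂(q,n)` with entries
`σ₂(q,n)_{km} = (-1)^{k+m} q^{-(k-m)(k-m-1)/2} C(k,m)_{q⁻¹}` for `m ≤ k`, and `0` otherwise. -/
noncomputable def sigma2 (q : ℂ) (n : ℕ) : Matrix (Fin (n + 1)) (Fin (n + 1)) ℂ :=
  fun k m =>
    if m.val ≤ k.val then
      (-1 : ℂ) ^ (k.val + m.val) *
        q ^ (-(((k.val - m.val) * (k.val - m.val - 1) / 2 : ℕ) : ℤ)) *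
        qBinom q⁻¹ k.val m.val
    else 0

/-- The matrix `S(q)` with entries `S(q)_{km} = (-1)^k q^{-k(k-1)/2}` when `k+m = n`,
and `0` otherwise. -/
noncomputable def Smat (q : ℂ) (n : ℕ) : Matrix (Fin (n + 1)) (Fin (n + 1)) ℂ :=
  fun k m =>
    if k.val + m.val = n then (-1 : ℂ) ^ k.val * q ^ (-((k.val * (k.val - 1) / 2 : ℕ) : ℤ))
    else 0

/-- `A^♯`, the matrix with entries `(A^♯)_{ij} = A_{n-i, n-j}`. -/
noncomputable def msharp {n : ℕ} (A : Matrix (Fin (n + 1)) (Fin (n + 1)) ℂ) :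
    Matrix (Fin (n + 1)) (Fin (n + 1)) ℂ :=
  fun i j => A i.rev j.rev

open Finset Matrix

lemma natCast_mul_sub_one_ediv_two (d : ℕ) : (d : ℤ) * (d - 1) / 2 = d.choose 2 := by
  rcases d with _ | d
  · rfl
  · rw [Nat.choose_two_right, Int.natCast_ediv]
    push_cast
    ring_nf

lemma qBinom_zero_right (q : ℂ) : ∀ n, qBinom q n 0 = 1
  | 0 => rfl
  | _ + 1 => rfl

lemma qBinom_succ_succ (q : ℂ) (n k : ℕ) :
    qBinom q (n + 1) (k + 1) = qBinom q n k + q ^ (k + 1) * qBinom q n (k + 1) := rfl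

lemma qBinom_eq_zero_of_lt (q : ℂ) : ∀ {n k : ℕ}, n < k → qBinom q n k = 0
  | 0, _ + 1, _ => rfl
  | n + 1, k + 1, h => by
    rw [qBinom_succ_succ, qBinom_eq_zero_of_lt q (by omega : n < k),
      qBinom_eq_zero_of_lt q (by omega : n < k + 1)]
    ring

lemma sum_qBinom_succ_mul (q : ℂ) {a N : ℕ} (haN : a < N) (g : ℕ → ℂ) :
    ∑ i ∈ range (N + 1), qBinom q (a + 1) i * g i =
      ∑ i ∈ range N, qBinom q a i * (g (i + 1) + q ^ i * g i) := by
  have hshift : ∑ i ∈ range N, qBinom q a i * (q ^ i * g i) =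
      ∑ i ∈ range N, q ^ (i + 1) * qBinom q a (i + 1) * g (i + 1) + g 0 := by
    have h := sum_range_succ' (fun i => qBinom q a i * (q ^ i * g i)) N
    rw [sum_range_succ, qBinom_eq_zero_of_lt q haN, zero_mul, add_zero] at h
    rw [h, qBinom_zero_right]
    congr 1
    · exact sum_congr rfl fun i _ => by ring
    · ring
  simp only [mul_add, sum_add_distrib, hshift]
  simp only [sum_range_succ', qBinom_succ_succ, qBinom_zero_right, add_mul, sum_add_distrib]
  ring

-- `i - j` truncates, which is harmless: `qBinom q i j = 0` for `i < j`.
noncomputable def qPascalInvEntry (q : ℂ) (i j : ℕ) : ℂ :=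
  (-1) ^ (i + j) * q ^ (i - j).choose 2 * qBinom q i j

lemma qPascalInvEntry_succ_zero_add (q : ℂ) (i : ℕ) :
    qPascalInvEntry q (i + 1) 0 + q ^ i * qPascalInvEntry q i 0 = 0 := by
  simp only [qPascalInvEntry, qBinom_zero_right, Nat.sub_zero, Nat.choose_succ_succ',
    Nat.choose_one_right]
  ring

lemma qPascalInvEntry_succ_succ_add (q : ℂ) (i j : ℕ) :
    qPascalInvEntry q (i + 1) (j + 1) + q ^ i * qPascalInvEntry q i (j + 1) =
      qPascalInvEntry q i j := by
  have hexp : q ^ ((i - j).choose 2 + (j + 1)) * qBinom q i (j + 1) =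
      q ^ ((i - (j + 1)).choose 2 + i) * qBinom q i (j + 1) := by
    rcases lt_or_ge i (j + 1) with h | h
    · rw [qBinom_eq_zero_of_lt q h, mul_zero, mul_zero]
    · obtain ⟨d, rfl⟩ := Nat.exists_eq_add_of_le h
      rw [show j + 1 + d - j = d + 1 by omega, Nat.add_sub_cancel_left, Nat.choose_succ_succ',
        Nat.choose_one_right]
      ring
  simp only [qPascalInvEntry, Nat.add_sub_add_right, qBinom_succ_succ]
  linear_combination (-1) ^ (i + j) * hexp

theorem sum_qBinom_mul_qPascalInvEntry (q : ℂ) {a N : ℕ} (haN : a < N) (b : ℕ) :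
    ∑ i ∈ range N, qBinom q a i * qPascalInvEntry q i b = if a = b then 1 else 0 := by
  induction a generalizing N b with
  | zero =>
    rw [sum_eq_single_of_mem 0 (mem_range.2 haN)
      fun i _ hi => by rw [qBinom_eq_zero_of_lt q (Nat.pos_of_ne_zero hi), zero_mul]]
    cases b <;> simp [qPascalInvEntry, qBinom_zero_right, qBinom_eq_zero_of_lt]
  | succ a ih =>
    obtain ⟨N, rfl⟩ := Nat.exists_eq_add_of_lt haN
    rw [sum_qBinom_succ_mul q (by omega)]
    cases b with
    | zero => simp [qPascalInvEntry_succ_zero_add]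
    | succ b => simp [qPascalInvEntry_succ_succ_add, ih (by omega : a < a + 1 + N)]

lemma qPascalInvEntry_eq_zpow (q : ℂ) (i j : ℕ) :
    qPascalInvEntry q i j =
      (-1) ^ (i + j) * q ^ (((i : ℤ) - j) * ((i : ℤ) - j - 1) / 2) * qBinom q i j := by
  rcases lt_or_ge i j with h | h
  · simp [qPascalInvEntry, qBinom_eq_zero_of_lt q h]
  · obtain ⟨d, rfl⟩ := Nat.exists_eq_add_of_le h
    rw [qPascalInvEntry, show ((j + d : ℕ) : ℤ) - j = d by push_cast; ring,
      natCast_mul_sub_one_ediv_two, zpow_natCast, Nat.add_sub_cancel_left]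

noncomputable def qPascal (q : ℂ) (n : ℕ) : Matrix (Fin n) (Fin n) ℂ :=
  of fun i j => qBinom q i j

noncomputable def qPascalInv (q : ℂ) (n : ℕ) : Matrix (Fin n) (Fin n) ℂ :=
  of fun i j => qPascalInvEntry q i j

theorem qPascal_mul_qPascalInv (q : ℂ) (n : ℕ) : qPascal q n * qPascalInv q n = 1 := by
  ext i j
  simp only [qPascal, qPascalInv, mul_apply, of_apply, one_apply]
  rw [Fin.sum_univ_eq_sum_range (fun k => qBinom q i k * qPascalInvEntry q k j),
    sum_qBinom_mul_qPascalInvEntry q i.isLt]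
  simp only [Fin.val_inj]

lemma sigma1_eq_submatrix_rev (q : ℂ) (n : ℕ) :
    sigma1 q n = (qPascal q (n + 1)).submatrix Fin.revPerm Fin.revPerm := by
  ext k m
  simp [sigma1, qPascal]

lemma qPascalInv_rev_apply (q : ℂ) (n : ℕ) (k m : Fin (n + 1)) :
    qPascalInv q (n + 1) k.rev m.rev =
      (-1 : ℂ) ^ (k.val + m.val) *
        q ^ ((((m.val : ℤ) - (k.val : ℤ)) * ((m.val : ℤ) - (k.val : ℤ) - 1)) / 2) *
        qBinom q (n - k.val) (n - m.val) := by
  have hk := k.is_le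
  have hm := m.is_le
  have hsign : (-1 : ℂ) ^ (n - k.val + (n - m.val)) = (-1) ^ (k.val + m.val) := by
    rw [neg_one_pow_eq_pow_mod_two, neg_one_pow_eq_pow_mod_two (n := k.val + m.val)]
    congr 1
    omega
  simp only [qPascalInv, of_apply, Fin.val_rev, Nat.add_sub_add_right, qPascalInvEntry_eq_zpow,
    hsign, Nat.cast_sub hk, Nat.cast_sub hm, sub_sub_sub_cancel_left]

/-- The matrix `M` with entries
`M_{km} = (-1)^{k+m} q^{(m-k)(m-k-1)/2} C(n-k, n-m)_q` is a two-sided inverse of `σ₁(q,n)`. -/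
theorem sigma1_inverse (n : ℕ) (q : ℂ)
    (M : Matrix (Fin (n + 1)) (Fin (n + 1)) ℂ)
    (hM : ∀ k m : Fin (n + 1), M k m =
      (-1 : ℂ) ^ (k.val + m.val) *
        q ^ ((((m.val : ℤ) - (k.val : ℤ)) * ((m.val : ℤ) - (k.val : ℤ) - 1)) / 2) *
        qBinom q (n - k.val) (n - m.val)) :
    sigma1 q n * M = 1 ∧ M * sigma1 q n = 1 := by
  have hM' : M = (qPascalInv q (n + 1)).submatrix Fin.revPerm Fin.revPerm := by
    ext k m
    rw [hM]
    exact (qPascalInv_rev_apply q n k m).symm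
  have hσM : sigma1 q n * M = 1 := by
    rw [sigma1_eq_submatrix_rev, hM', submatrix_mul_equiv, qPascal_mul_qPascalInv,
      submatrix_one_equiv]
  exact ⟨hσM, mul_eq_one_comm.mp hσM⟩
end

section
/- Let n ∈ ℕ with n ≥ 1, let σ₁ and σ₂ be the (n+1)×(n+1) complex matrices with entries σ₁_{km} = binom(n-k, n-m) and σ₂_{km} = (-1)^{k+m}·binom(k, m), and let Λ be the diagonal matrix with diagonal entries (-1)^k, k = 0,…,n (so that Λ^♯, the matrix with (Λ^♯)_{ij} = Λ_{n-i,n-j}, is diagonal with entries (-1)^{n-k}). Define e ∈ ℂ^{n+1} by: if n is even, e_0 = e_n = 2 and e_k = 1 for 0 < k < n; if n is odd, e_0 = e_n = 0 and e_k = 1 for 0 < k < n. Then (σ₁·Λ)·e = e and (Λ^♯·σ₂)·e = e; in particular, for n ≥ 2 the span of e is a nonzero proper common invariant subspace of σ₁·Λ and Λ^♯·σ₂. -/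
open Matrix

lemma neg_one_pow_mul_neg_one_pow_self {R : Type*} [Monoid R] [HasDistribNeg R] (n : ℕ) :
    (-1 : R) ^ n * (-1) ^ n = 1 :=
  pow_mul_pow_eq_one n (by rw [neg_one_mul, neg_neg])

lemma neg_one_pow_sub {R : Type*} [Monoid R] [HasDistribNeg R] {m n : ℕ} (h : m ≤ n) :
    (-1 : R) ^ (n - m) = (-1) ^ n * (-1) ^ m := by
  obtain ⟨d, rfl⟩ := Nat.exists_eq_add_of_le h
  rw [Nat.add_sub_cancel_left, add_comm m d, pow_add, mul_assoc,
    neg_one_pow_mul_neg_one_pow_self, mul_one]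

section AlternatingPascal

variable (R : Type*) [CommRing R] (n : ℕ)

def altPascal : Matrix (Fin (n + 1)) (Fin (n + 1)) R :=
  Matrix.of fun k m => (-1) ^ (m : ℕ) * (k.val.choose m : R)

/-- The vector `e` of the statement; the two agree only for `n ≥ 1`, where `δ₀ ≠ δₙ`. -/
def commonEigenvector : Fin (n + 1) → R :=
  1 + (-1 : R) ^ n • (Pi.single 0 1 + Pi.single (Fin.last n) 1)

variable {R n}

lemma sum_fin_neg_one_pow_mul_choose {k : ℕ} (hk : k ≤ n) :
    ∑ m : Fin (n + 1), (-1 : R) ^ (m : ℕ) * (k.choose m : R) = if k = 0 then 1 else 0 := by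
  rw [Fin.sum_univ_eq_sum_range (fun m => (-1 : R) ^ m * (k.choose m : R)),
    ← Finset.sum_subset (Finset.range_subset_range.2 (Nat.succ_le_succ hk))]
  · exact_mod_cast congrArg (Int.cast : ℤ → R) Int.alternating_sum_range_choose
  · intro m _ hm
    rw [Nat.choose_eq_zero_of_lt (by simpa using hm), Nat.cast_zero, mul_zero]

lemma altPascal_mulVec_one : altPascal R n *ᵥ 1 = Pi.single 0 1 := by
  ext k
  simp only [mulVec, dotProduct, altPascal, of_apply, Pi.one_apply, mul_one]
  rw [sum_fin_neg_one_pow_mul_choose (Fin.is_le k)]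
  simp [Pi.single_apply]

lemma altPascal_mulVec_single_zero : altPascal R n *ᵥ Pi.single 0 1 = 1 := by
  ext k
  simp [altPascal]

lemma altPascal_mulVec_single_last :
    altPascal R n *ᵥ Pi.single (Fin.last n) 1 = (-1 : R) ^ n • Pi.single (Fin.last n) 1 := by
  ext k
  rcases (Fin.is_le k).lt_or_eq with hk | hk
  · simp [altPascal, Nat.choose_eq_zero_of_lt hk, Fin.ext_iff, hk.ne]
  · simp [altPascal, Pi.single_apply, Fin.ext_iff, hk]

theorem altPascal_mulVec_commonEigenvector :
    altPascal R n *ᵥ commonEigenvector R n = (-1 : R) ^ n • commonEigenvector R n := by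
  simp only [commonEigenvector, mulVec_add, mulVec_smul, altPascal_mulVec_one,
    altPascal_mulVec_single_zero, altPascal_mulVec_single_last, smul_add, smul_smul,
    neg_one_pow_mul_neg_one_pow_self, one_smul]
  abel

lemma commonEigenvector_comp_rev : commonEigenvector R n ∘ Fin.rev = commonEigenvector R n := by
  ext k
  simp [commonEigenvector, Pi.single_apply, Fin.rev_eq_iff, add_comm]

end AlternatingPascal

section Sharp

variable {n : ℕ}

lemma msharp_mulVec (A : Matrix (Fin (n + 1)) (Fin (n + 1)) ℂ) (v : Fin (n + 1) → ℂ) :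
    msharp A *ᵥ v = (A *ᵥ (v ∘ Fin.rev)) ∘ Fin.rev :=
  submatrix_mulVec_equiv A v Fin.rev Fin.revPerm

lemma msharp_mulVec_eq_smul {A : Matrix (Fin (n + 1)) (Fin (n + 1)) ℂ} {v : Fin (n + 1) → ℂ}
    {c : ℂ} (hv : v ∘ Fin.rev = v) (hA : A *ᵥ v = c • v) : msharp A *ᵥ v = c • v := by
  rw [msharp_mulVec, hv, hA]
  exact congrArg (c • ·) hv

lemma msharp_diagonal (d : Fin (n + 1) → ℂ) : msharp (diagonal d) = diagonal (d ∘ Fin.rev) :=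
  submatrix_diagonal_equiv d Fin.revPerm

end Sharp

section BinomialMatrices

variable {n : ℕ} {Λ : Matrix (Fin (n + 1)) (Fin (n + 1)) ℂ}

lemma mul_eq_smul_msharp_altPascal {σ1 : Matrix (Fin (n + 1)) (Fin (n + 1)) ℂ}
    (hΛ : Λ = diagonal (fun k : Fin (n + 1) => (-1 : ℂ) ^ k.val))
    (hσ1 : ∀ k m : Fin (n + 1), σ1 k m = (Nat.choose (n - k.val) (n - m.val) : ℂ)) :
    σ1 * Λ = (-1 : ℂ) ^ n • msharp (altPascal ℂ n) := by
  ext k m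
  rw [hΛ, mul_diagonal, hσ1, Matrix.smul_apply, msharp, altPascal, of_apply, Fin.val_rev,
    Fin.val_rev, Nat.add_sub_add_right, Nat.add_sub_add_right, smul_eq_mul,
    neg_one_pow_sub m.is_le, ← mul_assoc, ← mul_assoc, neg_one_pow_mul_neg_one_pow_self, one_mul,
    mul_comm]

lemma msharp_mul_eq_smul_altPascal {σ2 : Matrix (Fin (n + 1)) (Fin (n + 1)) ℂ}
    (hΛ : Λ = diagonal (fun k : Fin (n + 1) => (-1 : ℂ) ^ k.val))
    (hσ2 : ∀ k m : Fin (n + 1),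
      σ2 k m = (-1 : ℂ) ^ (k.val + m.val) * (Nat.choose k.val m.val : ℂ)) :
    msharp Λ * σ2 = (-1 : ℂ) ^ n • altPascal ℂ n := by
  ext k m
  rw [hΛ, msharp_diagonal, diagonal_mul, hσ2, Matrix.smul_apply, altPascal, of_apply,
    Function.comp_apply, Fin.val_rev, Nat.add_sub_add_right, smul_eq_mul, ← mul_assoc, ← pow_add,
    show n - k + (k + m) = n + m by omega, pow_add, mul_assoc]

end BinomialMatrices

lemma commonEigenvector_apply {n : ℕ} (hn : 1 ≤ n) (k : Fin (n + 1)) :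
    commonEigenvector ℂ n k = if k.val = 0 ∨ k.val = n then (if Even n then 2 else 0) else 1 := by
  have hlast : k = Fin.last n ↔ k.val = n := by rw [Fin.ext_iff, Fin.val_last]
  simp only [commonEigenvector, Pi.add_apply, Pi.one_apply, Pi.smul_apply, smul_eq_mul,
    Pi.single_apply, hlast, ← Fin.val_eq_zero_iff]
  rcases n.even_or_odd with h | h
  · rw [h.neg_one_pow, if_pos h]
    split_ifs <;> first | omega | norm_num
  · rw [h.neg_one_pow, if_neg (Nat.not_even_iff_odd.2 h)]
    split_ifs <;> first | omega | norm_num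

lemma span_singleton_ne_top_of_one_lt_finrank {K V : Type*} [DivisionRing K] [AddCommGroup V]
    [Module K V] [FiniteDimensional K V] (h : 1 < Module.finrank K V) (v : V) :
    K ∙ v ≠ ⊤ := by
  intro hv
  have := finrank_span_le_card (R := K) ({v} : Set V)
  rw [hv, finrank_top] at this
  rw [Set.toFinset_singleton, Finset.card_singleton] at this
  omega

lemma mulVec_mem_span_singleton {R ι : Type*} [CommRing R] [Fintype ι]
    {A : Matrix ι ι R} {v x : ι → R} (hv : A *ᵥ v = v) (hx : x ∈ R ∙ v) : A *ᵥ x ∈ R ∙ v := by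
  obtain ⟨c, rfl⟩ := Submodule.mem_span_singleton.1 hx
  rw [mulVec_smul, hv]
  exact Submodule.smul_mem _ c (Submodule.mem_span_singleton_self v)

/-- For `n ≥ 1`, `Λ = diag((-1)^k)` and the vector `e` with
`e_0 = e_n = 2` (resp. `0`) and middle entries `1` for `n` even (resp. odd), we have
`(σ₁ Λ) e = e` and `(Λ^♯ σ₂) e = e`; in particular, for `n ≥ 2` the span of `e` is a
nonzero proper common invariant subspace of `σ₁ Λ` and `Λ^♯ σ₂`. -/
theorem alternating_lambda_common_eigenvector (n : ℕ) (hn : 1 ≤ n)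
    (σ1 σ2 : Matrix (Fin (n + 1)) (Fin (n + 1)) ℂ)
    (hσ1 : ∀ k m : Fin (n + 1), σ1 k m = (Nat.choose (n - k.val) (n - m.val) : ℂ))
    (hσ2 : ∀ k m : Fin (n + 1),
      σ2 k m = (-1 : ℂ) ^ (k.val + m.val) * (Nat.choose k.val m.val : ℂ))
    (Λ : Matrix (Fin (n + 1)) (Fin (n + 1)) ℂ)
    (hΛ : Λ = Matrix.diagonal (fun k : Fin (n + 1) => (-1 : ℂ) ^ k.val))
    (e : Fin (n + 1) → ℂ)
    (he : ∀ k : Fin (n + 1),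
      e k = if k.val = 0 ∨ k.val = n then (if Even n then 2 else 0) else 1) :
    (σ1 * Λ).mulVec e = e ∧ (msharp Λ * σ2).mulVec e = e ∧
      (2 ≤ n →
        Submodule.span ℂ {e} ≠ ⊥ ∧ Submodule.span ℂ {e} ≠ ⊤ ∧
        ∀ x ∈ Submodule.span ℂ {e},
          (σ1 * Λ).mulVec x ∈ Submodule.span ℂ {e} ∧
            (msharp Λ * σ2).mulVec x ∈ Submodule.span ℂ {e}) := by
  obtain rfl : e = commonEigenvector ℂ n :=
    funext fun k => (he k).trans (commonEigenvector_apply hn k).symm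
  have hsign : (-1 : ℂ) ^ n • (-1 : ℂ) ^ n • commonEigenvector ℂ n = commonEigenvector ℂ n := by
    rw [smul_smul, neg_one_pow_mul_neg_one_pow_self, one_smul]
  have hA : (σ1 * Λ) *ᵥ commonEigenvector ℂ n = commonEigenvector ℂ n := by
    rw [mul_eq_smul_msharp_altPascal hΛ hσ1, smul_mulVec,
      msharp_mulVec_eq_smul commonEigenvector_comp_rev altPascal_mulVec_commonEigenvector, hsign]
  have hB : (msharp Λ * σ2) *ᵥ commonEigenvector ℂ n = commonEigenvector ℂ n := by
    rw [msharp_mul_eq_smul_altPascal hΛ hσ2, smul_mulVec,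
      altPascal_mulVec_commonEigenvector, hsign]
  refine ⟨hA, hB, fun hn2 => ⟨?_, ?_, fun x hx =>
    ⟨mulVec_mem_span_singleton hA hx, mulVec_mem_span_singleton hB hx⟩⟩⟩
  · rw [Ne, Submodule.span_singleton_eq_bot]
    intro h
    have h1 := congrFun h ⟨1, by omega⟩
    rw [commonEigenvector_apply hn, if_neg (by rw [Fin.val_mk]; omega)] at h1
    exact one_ne_zero h1
  · exact span_singleton_ne_top_of_one_lt_finrank (by rw [Module.finrank_fin_fun]; omega) _
end

section
/- Let n ∈ ℕ, let α ∈ ℂ with α ≠ 0 and α ≠ 1, let σ₁ and σ₂ be the (n+1)×(n+1) complex matrices with entries σ₁_{km} = binom(n-k, n-m) and σ₂_{km} = (-1)^{k+m}·binom(k, m), and let Λ(α) be the diagonal matrix with diagonal entries α^{n-k}, k = 0,…,n. Then: (1) the vector e ∈ ℂ^{n+1} with e_k = (1-α)^{-(n-k)} satisfies (σ₁·Λ(α))·e = e; and (2) the vector f ∈ ℂ^{n+1} with f_k = (1-α^{-1})^{n-k} satisfies (Λ(α)^♯·σ₂)·f = f, where Λ(α)^♯ is the diagonal matrix with entries α^{k},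 k = 0,…,n. -/
/-!
Both identities are instances of the binomial theorem. After the reflection `m ↦ n - m`,
entry `k` of `(σ₁ Λ(α)) e` is `∑ⱼ C(n-k, j) (α/(1-α))ʲ = (α/(1-α) + 1)^(n-k) = (1-α)^-(n-k)`.
With `γ = 1 - α⁻¹`, entry `k` of `(Λ(α)^♯ σ₂) f` is `αᵏ γ^(n-k) (1-γ)ᵏ`, and `1 - γ = α⁻¹`.
-/

open Finset Matrix

section

variable {R : Type*} [CommRing R]

theorem sum_fin_choose_mul_eq_sum_range {K n : ℕ} (hK : K ≤ n) (g : ℕ → R) :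
    ∑ m : Fin (n + 1), (K.choose m : R) * g m = ∑ m ∈ range (K + 1), (K.choose m : R) * g m := by
  rw [Fin.sum_univ_eq_sum_range (fun m => (K.choose m : R) * g m)]
  refine (sum_subset (range_subset_range.2 (by omega)) fun m _ hm => ?_).symm
  rw [Nat.choose_eq_zero_of_lt (by simpa using hm), Nat.cast_zero, zero_mul]

theorem sum_fin_choose_sub_mul_pow_sub {K n : ℕ} (hK : K ≤ n) (x : R) :
    ∑ m : Fin (n + 1), (K.choose (n - m) : R) * x ^ (n - m) = (x + 1) ^ K := by
  rw [← Equiv.sum_comp Fin.revPerm]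
  simp only [Fin.revPerm_apply, Fin.val_rev]
  have hrev : ∀ m : Fin (n + 1), n - (n + 1 - (m + 1)) = m := fun m => by omega
  simp only [hrev]
  rw [sum_fin_choose_mul_eq_sum_range hK, add_pow]
  exact sum_congr rfl fun m _ => by ring

theorem sum_fin_neg_one_pow_mul_choose_mul_pow {k n : ℕ} (hk : k ≤ n) (γ : R) :
    ∑ m : Fin (n + 1), (-1) ^ (k + m : ℕ) * (k.choose m : R) * γ ^ (n - m) =
      γ ^ (n - k) * (1 - γ) ^ k := by
  have hsplit : ∀ m ∈ range (k + 1), γ ^ (n - m) = γ ^ (n - k) * γ ^ (k - m) := fun m hm => by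
    rw [← pow_add]; congr 1; have := mem_range.1 hm; omega
  simp only [mul_comm _ (k.choose _ : R), mul_assoc]
  rw [sum_fin_choose_mul_eq_sum_range hk (fun m => (-1) ^ (k + m) * γ ^ (n - m)), sub_pow, mul_sum]
  refine sum_congr rfl fun m hm => ?_
  rw [hsplit m hm, add_comm k m]
  ring

end

/-- For `α ≠ 0, 1` and `Λ(α) = diag(α^{n-k})`:
(1) the vector `e_k = (1-α)^{-(n-k)}` satisfies `(σ₁ Λ(α)) e = e`; and
(2) the vector `f_k = (1-α⁻¹)^{n-k}` satisfies `(Λ(α)^♯ σ₂) f = f`, where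
`Λ(α)^♯ = diag(α^k)`. -/
theorem general_lambda_eigenvectors (n : ℕ) (α : ℂ) (hα0 : α ≠ 0) (hα1 : α ≠ 1)
    (σ1 σ2 : Matrix (Fin (n + 1)) (Fin (n + 1)) ℂ)
    (hσ1 : ∀ k m : Fin (n + 1), σ1 k m = (Nat.choose (n - k.val) (n - m.val) : ℂ))
    (hσ2 : ∀ k m : Fin (n + 1),
      σ2 k m = (-1 : ℂ) ^ (k.val + m.val) * (Nat.choose k.val m.val : ℂ))
    (e f : Fin (n + 1) → ℂ)
    (he : ∀ k : Fin (n + 1), e k = ((1 - α) ^ (n - k.val))⁻¹)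
    (hf : ∀ k : Fin (n + 1), f k = (1 - α⁻¹) ^ (n - k.val)) :
    (σ1 * Matrix.diagonal (fun k : Fin (n + 1) => α ^ (n - k.val))).mulVec e = e ∧
      (Matrix.diagonal (fun k : Fin (n + 1) => α ^ k.val) * σ2).mulVec f = f := by
  have hβ : 1 - α ≠ 0 := sub_ne_zero.2 hα1.symm
  constructor
  · ext k
    calc ((σ1 * diagonal _) *ᵥ e) k
        = ∑ m : Fin (n + 1), ((n - k).choose (n - m) : ℂ) * (α / (1 - α)) ^ (n - m) := by
          simp only [mulVec, dotProduct, mul_diagonal, hσ1, he, div_eq_mul_inv, mul_pow, inv_pow,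
            mul_assoc]
      _ = (α / (1 - α) + 1) ^ (n - k) := sum_fin_choose_sub_mul_pow_sub (Nat.sub_le n k) _
      _ = e k := by rw [he, div_add_one hβ, add_sub_cancel, div_pow, one_pow, one_div]
  · ext k
    calc ((diagonal _ * σ2) *ᵥ f) k
        = α ^ (k : ℕ) * ∑ m : Fin (n + 1),
            (-1) ^ (k + m : ℕ) * ((k : ℕ).choose m : ℂ) * (1 - α⁻¹) ^ (n - m) := by
          simp only [mulVec, dotProduct, diagonal_mul, hσ2, hf, mul_sum, mul_assoc]
      _ = α ^ (k : ℕ) * ((1 - α⁻¹) ^ (n - k) * (1 - (1 - α⁻¹)) ^ (k : ℕ)) := by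
          rw [sum_fin_neg_one_pow_mul_choose_mul_pow k.is_le]
      _ = f k := by
          rw [hf, sub_sub_cancel, inv_pow, mul_left_comm, mul_inv_cancel₀ (pow_ne_zero _ hα0),
            mul_one]
end
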